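/- arXiv:2012.03031 — 3 statements merged into one kernel-verified Lean document; each statement's English description precedes it below -/
import Mathlib

section
/- If nonnegative random variables r^C and r^D satisfy Pr{r^D > η·r^C} > 1 - r_th²/E[(r^C)²] (with E[(r^C)²] > 0 and r_th > 0), then E[r^C · 1(η·r^C ≥ r^D)] < r_th. -/
/-! With `f = 1(η r^C ≥ r^D) · r^C`, the support of `f` misses the event `{η r^C < r^D}`, so it has
probability below `r_th² / E[(r^C)²]`; Cauchy–Schwarz against the indicator of the support gives
`E[f]² ≤ P(f ≠ 0) · E[f²] ≤ P(f ≠ 0) · E[(r^C)²] < r_th²`. Neither `r^C` nor `r^D` is assumed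
measurable, so the argument uses only that the support of `f` is null-measurable, which holds once
`f` is integrable; otherwise `∫ f = 0 < r_th` by convention. -/

open MeasureTheory

namespace MeasureTheory

variable {Ω : Type*} [MeasurableSpace Ω] {μ : Measure Ω}

/-- Cauchy–Schwarz `∫ χ |f| ≤ ‖χ‖₂ ‖f‖₂`, with `χ` the indicator of a measurable hull of the
support. -/
theorem integral_le_sqrt_measureReal_support_mul_sqrt_integral_sq {f : Ω → ℝ}
    (hμf : μ (Function.support f) ≠ ⊤) (hf : MemLp f 2 μ) :
    ∫ ω, f ω ∂μ ≤ √(μ.real (Function.support f)) * √(∫ ω, f ω ^ 2 ∂μ) := by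
  set s := toMeasurable μ (Function.support f)
  have hs : MeasurableSet s := measurableSet_toMeasurable _ _
  set χ : Ω → ℝ := s.indicator fun _ => 1
  have hχ : MemLp χ (ENNReal.ofReal 2) μ := by
    simpa using memLp_indicator_const 2 hs (1 : ℝ) (Or.inr (by rwa [measure_toMeasurable]))
  have hf' : MemLp f (ENNReal.ofReal 2) μ := by simpa using hf
  have hfχ : ∀ ω, ‖f ω‖ = ‖χ ω‖ * ‖f ω‖ := fun ω => by
    by_cases hω : ω ∈ s
    · simp [χ, hω]
    · simp [Function.notMem_support.mp fun h => hω (subset_toMeasurable _ _ h)]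
  have hχ_sq : ∫ ω, ‖χ ω‖ ^ (2 : ℝ) ∂μ = μ.real (Function.support f) := by
    have : ∀ ω, ‖χ ω‖ ^ (2 : ℝ) = χ ω := fun ω => by
      by_cases hω : ω ∈ s <;> simp [χ, hω]
    simp only [this, χ, integral_indicator_const _ hs, smul_eq_mul, mul_one, measureReal_def,
      s, measure_toMeasurable]
  have hf_sq : ∫ ω, ‖f ω‖ ^ (2 : ℝ) ∂μ = ∫ ω, f ω ^ 2 ∂μ := by
    simp only [Real.rpow_two, Real.norm_eq_abs, sq_abs]
  calc ∫ ω, f ω ∂μ ≤ ∫ ω, ‖f ω‖ ∂μ := (le_abs_self _).trans (norm_integral_le_integral_norm f)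
    _ = ∫ ω, ‖χ ω‖ * ‖f ω‖ ∂μ := by simp only [← hfχ]
    _ ≤ (∫ ω, ‖χ ω‖ ^ (2 : ℝ) ∂μ) ^ (1 / (2 : ℝ)) * (∫ ω, ‖f ω‖ ^ (2 : ℝ) ∂μ) ^ (1 / (2 : ℝ)) :=
        integral_mul_norm_le_Lp_mul_Lq Real.HolderConjugate.two_two hχ hf'
    _ = √(μ.real (Function.support f)) * √(∫ ω, f ω ^ 2 ∂μ) := by
        rw [hχ_sq, hf_sq, Real.sqrt_eq_rpow, Real.sqrt_eq_rpow]

theorem measureReal_support_le_one_sub [IsProbabilityMeasure μ] {f : Ω → ℝ}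
    (hf : AEMeasurable f μ) {B : Set Ω} (hB : ∀ ω ∈ B, f ω = 0) :
    μ.real (Function.support f) ≤ 1 - μ.real B := by
  have hsupp : NullMeasurableSet (Function.support f) μ :=
    (hf.nullMeasurable (measurableSet_singleton 0)).compl
  have hB_sub : B ⊆ (Function.support f)ᶜ := fun ω hω => Function.notMem_support.mpr (hB ω hω)
  linarith [measureReal_compl₀ hsupp, measureReal_mono hB_sub (μ := μ), probReal_univ (μ := μ)]

end MeasureTheory

theorem stmt1_general {Ω : Type*} [MeasurableSpace Ω] (μ : Measure Ω) [IsProbabilityMeasure μ]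
    (rC rD : Ω → ℝ)
    (hL2 : MemLp rC 2 μ) (η rth : ℝ) (hrth : 0 < rth)
    (hpos : 0 < ∫ ω, (rC ω) ^ 2 ∂μ)
    (hprob : 1 - rth ^ 2 / ∫ ω, (rC ω) ^ 2 ∂μ < (μ {ω | η * rC ω < rD ω}).toReal) :
    ∫ ω, ({ω | rD ω ≤ η * rC ω}.indicator rC) ω ∂μ < rth := by
  set f := {ω | rD ω ≤ η * rC ω}.indicator rC
  by_cases hfi : Integrable f μ
  swap
  · rw [integral_undef hfi]; exact hrth
  have hf : MemLp f 2 μ :=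
    hL2.of_le hfi.aestronglyMeasurable (ae_of_all _ fun _ => norm_indicator_le_norm_self _ _)
  have hf_sq : ∫ ω, f ω ^ 2 ∂μ ≤ ∫ ω, rC ω ^ 2 ∂μ :=
    integral_mono hf.integrable_sq hL2.integrable_sq fun ω =>
      sq_le_sq.mpr (norm_indicator_le_norm_self rC ω)
  have hsupp : μ.real (Function.support f) * ∫ ω, rC ω ^ 2 ∂μ < rth ^ 2 := by
    have := measureReal_support_le_one_sub hfi.aemeasurable (B := {ω | η * rC ω < rD ω})
      fun _ hω => Set.indicator_of_notMem (by simpa using hω) rC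
    exact (lt_div_iff₀ hpos).mp (this.trans_lt (by rw [measureReal_def]; linarith))
  calc ∫ ω, f ω ∂μ ≤ √(μ.real (Function.support f)) * √(∫ ω, f ω ^ 2 ∂μ) :=
        integral_le_sqrt_measureReal_support_mul_sqrt_integral_sq (measure_ne_top _ _) hf
    _ ≤ √(μ.real (Function.support f)) * √(∫ ω, rC ω ^ 2 ∂μ) := by gcongr
    _ = √(μ.real (Function.support f) * ∫ ω, rC ω ^ 2 ∂μ) := (Real.sqrt_mul' _ hpos.le).symm
    _ < √(rth ^ 2) := Real.sqrt_lt_sqrt (by positivity) hsupp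
    _ = rth := Real.sqrt_sq hrth.le

/-- If `Pr{r^D > η r^C} > 1 - r_th² / E[(r^C)²]`, then `E[r^C · 1(η r^C ≥ r^D)] < r_th`. -/
theorem stmt1 {Ω : Type*} [MeasurableSpace Ω] (μ : Measure Ω) [IsProbabilityMeasure μ]
    (rC rD : Ω → ℝ) (hC : ∀ ω, 0 ≤ rC ω) (hD : ∀ ω, 0 ≤ rD ω)
    (hL2 : MemLp rC 2 μ) (η rth : ℝ) (hη : 0 ≤ η) (hrth : 0 < rth)
    (hpos : 0 < ∫ ω, (rC ω) ^ 2 ∂μ)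
    (hprob : 1 - rth ^ 2 / ∫ ω, (rC ω) ^ 2 ∂μ < (μ {ω | η * rC ω < rD ω}).toReal) :
    ∫ ω, ({ω | rD ω ≤ η * rC ω}.indicator rC) ω ∂μ < rth :=
  stmt1_general μ rC rD hL2 η rth hrth hpos hprob
end

section
/- Let v : M × N → ℝ be a value matrix on finite index sets M, N, and let ε ≥ 0. Suppose (θ, δ) with θ : M → ℝ, δ : N → ℝ satisfies θ_m ≥ 0, δ_n ≥ 0 for all m, n, and θ_m + δ_n ≥ v(m,n) − ε for all (m,n). Let X : M × N → {0,1} be any assignment with at most one 1 per row and per column, and with θ_m + δ_{μ(m)} = v(m, μ(m)) whenever X(m, μ(m)) = 1, θ_m = 0 for unmatched m, δ_n = 0 for unmatched n. Then for the optimal assignment X* maximizing ∑ v(m,n)X(m,n), we have ∑_{m,n} v(m,n) X(m,n) ≥ ∑_{m,n} v(m,n) X*(m,n) − ε·min(|M|,|N|). -/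
/-- Suboptimality bound for the assignment associated with an ε-stable matching
(Theorem 2): `V(X_Φ) ≥ V(X*) − ε·min(|M|,|N|)`. -/
theorem stmt3 {M N : Type*} [Fintype M] [Fintype N]
    (v : M × N → ℝ) (ε : ℝ) (hε : 0 ≤ ε) (θ : M → ℝ) (δ : N → ℝ)
    (hθ : ∀ m, 0 ≤ θ m) (hδ : ∀ n, 0 ≤ δ n)
    (hstab : ∀ m n, v (m, n) - ε ≤ θ m + δ n)
    (X Xopt : M → N → ℝ)
    (hX01 : ∀ m n, X m n = 0 ∨ X m n = 1)
    (hXrow : ∀ m, ∑ n, X m n ≤ 1) (hXcol : ∀ n, ∑ m, X m n ≤ 1)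
    (hcomp : ∀ m n, X m n = 1 → θ m + δ n = v (m, n))
    (hθ0 : ∀ m, (∀ n, X m n = 0) → θ m = 0)
    (hδ0 : ∀ n, (∀ m, X m n = 0) → δ n = 0)
    (hOpt01 : ∀ m n, Xopt m n = 0 ∨ Xopt m n = 1)
    (hOptrow : ∀ m, ∑ n, Xopt m n ≤ 1) (hOptcol : ∀ n, ∑ m, Xopt m n ≤ 1)
    (hopt : ∀ X' : M → N → ℝ, (∀ m n, X' m n = 0 ∨ X' m n = 1) →
      (∀ m, ∑ n, X' m n ≤ 1) → (∀ n, ∑ m, X' m n ≤ 1) →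
      ∑ m, ∑ n, v (m, n) * X' m n ≤ ∑ m, ∑ n, v (m, n) * Xopt m n) :
    ∑ m, ∑ n, v (m, n) * Xopt m n - ε * (min (Fintype.card M) (Fintype.card N) : ℝ) ≤
      ∑ m, ∑ n, v (m, n) * X m n := by
  have hXnn : ∀ m n, (0:ℝ) ≤ X m n := by
    intro m n; rcases hX01 m n with h | h <;> simp [h]
  have hOnn : ∀ m n, (0:ℝ) ≤ Xopt m n := by
    intro m n; rcases hOpt01 m n with h | h <;> simp [h]
  -- Step 1: value of X equals ∑θ + ∑δ
  have h1 : ∑ m, ∑ n, v (m, n) * X m n = ∑ m, ∑ n, (θ m + δ n) * X m n := by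
    refine Finset.sum_congr rfl fun m _ => Finset.sum_congr rfl fun n _ => ?_
    rcases hX01 m n with h | h
    · simp [h]
    · rw [h, hcomp m n h]
  have hsplit : ∀ (Y : M → N → ℝ), ∑ m, ∑ n, (θ m + δ n) * Y m n
      = ∑ m, θ m * ∑ n, Y m n + ∑ n, δ n * ∑ m, Y m n := by
    intro Y
    have : ∀ m, ∑ n, (θ m + δ n) * Y m n
        = θ m * ∑ n, Y m n + ∑ n, δ n * Y m n := by
      intro m
      rw [Finset.mul_sum, ← Finset.sum_add_distrib]
      exact Finset.sum_congr rfl fun n _ => by ring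
    rw [Finset.sum_congr rfl fun m _ => this m, Finset.sum_add_distrib]
    congr 1
    rw [Finset.sum_comm]
    exact Finset.sum_congr rfl fun n _ => (Finset.mul_sum _ _ _).symm
  have hrow1 : ∀ m, θ m * ∑ n, X m n = θ m := by
    intro m
    by_cases h : ∀ n, X m n = 0
    · simp [hθ0 m h, h]
    · push_neg at h
      obtain ⟨n0, hn0⟩ := h
      have h1' : X m n0 = 1 := (hX01 m n0).resolve_left hn0
      have hge : (1:ℝ) ≤ ∑ n, X m n := by
        calc (1:ℝ) = X m n0 := h1'.symm
        _ ≤ ∑ n, X m n :=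
          Finset.single_le_sum (fun n _ => hXnn m n) (Finset.mem_univ n0)
      rw [le_antisymm (hXrow m) hge, mul_one]
  have hcol1 : ∀ n, δ n * ∑ m, X m n = δ n := by
    intro n
    by_cases h : ∀ m, X m n = 0
    · simp [hδ0 n h, h]
    · push_neg at h
      obtain ⟨m0, hm0⟩ := h
      have h1' : X m0 n = 1 := (hX01 m0 n).resolve_left hm0
      have hge : (1:ℝ) ≤ ∑ m, X m n := by
        calc (1:ℝ) = X m0 n := h1'.symm
        _ ≤ ∑ m, X m n :=
          Finset.single_le_sum (fun m _ => hXnn m n) (Finset.mem_univ m0)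
      rw [le_antisymm (hXcol n) hge, mul_one]
  have hval : ∑ m, ∑ n, v (m, n) * X m n = ∑ m, θ m + ∑ n, δ n := by
    rw [h1, hsplit]
    congr 1
    · exact Finset.sum_congr rfl fun m _ => hrow1 m
    · exact Finset.sum_congr rfl fun n _ => hcol1 n
  -- Step 2: bound value of Xopt
  have hT : ∑ m, ∑ n, Xopt m n ≤ (min (Fintype.card M) (Fintype.card N) : ℝ) := by
    have h1' : ∑ m, ∑ n, Xopt m n ≤ (Fintype.card M : ℝ) := by
      calc ∑ m, ∑ n, Xopt m n ≤ ∑ _m : M, (1:ℝ) :=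
            Finset.sum_le_sum fun m _ => hOptrow m
        _ = (Fintype.card M : ℝ) := by simp
    have h2' : ∑ m, ∑ n, Xopt m n ≤ (Fintype.card N : ℝ) := by
      rw [Finset.sum_comm]
      calc ∑ n, ∑ m, Xopt m n ≤ ∑ _n : N, (1:ℝ) :=
            Finset.sum_le_sum fun n _ => hOptcol n
        _ = (Fintype.card N : ℝ) := by simp
    have : (min (Fintype.card M) (Fintype.card N) : ℝ)
        = min (Fintype.card M : ℝ) (Fintype.card N : ℝ) := by
      push_cast; rfl
    rw [this]
    exact le_min h1' h2'
  have hbound : ∑ m, ∑ n, v (m, n) * Xopt m n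
      ≤ ∑ m, θ m + ∑ n, δ n + ε * (min (Fintype.card M) (Fintype.card N) : ℝ) := by
    have step : ∑ m, ∑ n, v (m, n) * Xopt m n
        ≤ ∑ m, ∑ n, (θ m + δ n) * Xopt m n + ε * ∑ m, ∑ n, Xopt m n := by
      rw [Finset.mul_sum, ← Finset.sum_add_distrib]
      refine Finset.sum_le_sum fun m _ => ?_
      rw [Finset.mul_sum, ← Finset.sum_add_distrib]
      refine Finset.sum_le_sum fun n _ => ?_
      have h := hstab m n
      nlinarith [hOnn m n]
    refine step.trans ?_
    have hθb : ∑ m, θ m * ∑ n, Xopt m n ≤ ∑ m, θ m := by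
      refine Finset.sum_le_sum fun m _ => ?_
      calc θ m * ∑ n, Xopt m n ≤ θ m * 1 :=
            mul_le_mul_of_nonneg_left (hOptrow m) (hθ m)
        _ = θ m := mul_one _
    have hδb : ∑ n, δ n * ∑ m, Xopt m n ≤ ∑ n, δ n := by
      refine Finset.sum_le_sum fun n _ => ?_
      calc δ n * ∑ m, Xopt m n ≤ δ n * 1 :=
            mul_le_mul_of_nonneg_left (hOptcol n) (hδ n)
        _ = δ n := mul_one _
    have hεT : ε * ∑ m, ∑ n, Xopt m n
        ≤ ε * (min (Fintype.card M) (Fintype.card N) : ℝ) :=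
      mul_le_mul_of_nonneg_left hT hε
    rw [hsplit]
    linarith
  rw [hval]
  linarith
end

section
/- Let g(λ) = E[1(λ r^C < r^D)(r^D − λ r^C)] + λ E[r^C] − λ r_th be the Lagrange dual function. If λ* = min{λ ≥ 0 : E[r^C 1(λ r^C ≥ r^D)] ≥ r_th}, then for all Δλ > 0: g(λ* + Δλ) ≥ g(λ*), i.e., g is nondecreasing to the right of λ*. -/
/-! `E[r^C 1(λ r^C ≥ r^D)] − r_th` is a subgradient of `g` at every `λ`,
because `λ ↦ (r^D − λ r^C)⁺` has subgradient `−r^C 1(λ r^C < r^D)` pointwise. At `λ*` this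
subgradient is nonnegative, so `g` cannot decrease to the right of `λ*`. -/

open MeasureTheory Set

/-- The Lagrange dual function `g(λ) = E[1(λ r^C < r^D)(r^D − λ r^C)] + λ E[r^C] − λ r_th`. -/
noncomputable def dualFn {S : Type*} [MeasurableSpace S] (μ : Measure S)
    (rC rD : S → ℝ) (rth : ℝ) (l : ℝ) : ℝ :=
  (∫ s, ({s | l * rC s < rD s}.indicator (fun s => rD s - l * rC s)) s ∂μ) +
    l * (∫ s, rC s ∂μ) - l * rth

theorem indicator_sub_mul_add_mul_le {S : Type*} (rC rD : S → ℝ) (l Δ : ℝ) (s : S) :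
    {s | l * rC s < rD s}.indicator (fun s => rD s - l * rC s) s +
        Δ * ({s | rD s ≤ l * rC s}.indicator rC s - rC s) ≤
      {s | (l + Δ) * rC s < rD s}.indicator (fun s => rD s - (l + Δ) * rC s) s := by
  simp only [indicator_apply, mem_ofPred_eq]
  split_ifs <;> linarith

section DualFunction

variable {S : Type*} [MeasurableSpace S] {μ : Measure S} {rC rD : S → ℝ}

theorem integrable_indicator_sub_mul (hCi : Integrable rC μ) (hDi : Integrable rD μ) (l : ℝ) :
    Integrable ({s | l * rC s < rD s}.indicator (fun s => rD s - l * rC s)) μ :=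
  (hDi.sub (hCi.const_mul l)).indicator₀
    ((hCi.const_mul l).aestronglyMeasurable.nullMeasurableSet_lt hDi.aestronglyMeasurable)

theorem integrable_indicator_le_mul (hCi : Integrable rC μ) (hDi : Integrable rD μ) (l : ℝ) :
    Integrable ({s | rD s ≤ l * rC s}.indicator rC) μ :=
  hCi.indicator₀
    (hDi.aestronglyMeasurable.nullMeasurableSet_le (hCi.const_mul l).aestronglyMeasurable)

theorem dualFn_add_mul_le (hCi : Integrable rC μ) (hDi : Integrable rD μ) (rth l Δ : ℝ) :
    dualFn μ rC rD rth l +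
        Δ * ((∫ s, {s | rD s ≤ l * rC s}.indicator rC s ∂μ) - rth) ≤
      dualFn μ rC rD rth (l + Δ) := by
  have hcov := integrable_indicator_le_mul hCi hDi l
  have hcov_sub : Integrable (fun s => Δ * ({s | rD s ≤ l * rC s}.indicator rC s - rC s)) μ :=
    (hcov.sub hCi).const_mul Δ
  have hmono : ∫ s, ({s | l * rC s < rD s}.indicator (fun s => rD s - l * rC s) s +
        Δ * ({s | rD s ≤ l * rC s}.indicator rC s - rC s)) ∂μ ≤
      ∫ s, {s | (l + Δ) * rC s < rD s}.indicator (fun s => rD s - (l + Δ) * rC s) s ∂μ :=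
    integral_mono ((integrable_indicator_sub_mul hCi hDi l).add hcov_sub)
      (integrable_indicator_sub_mul hCi hDi (l + Δ)) (indicator_sub_mul_add_mul_le rC rD l Δ)
  rw [integral_add (integrable_indicator_sub_mul hCi hDi l) hcov_sub, integral_const_mul,
    integral_sub hcov hCi] at hmono
  unfold dualFn
  linarith

end DualFunction

theorem stmt11_general {S : Type*} [MeasurableSpace S] (μ : Measure S)
    (rC rD : S → ℝ)
    (hCi : Integrable rC μ) (hDi : Integrable rD μ)
    (rth : ℝ) (lstar : ℝ)
    (hmem : rth ≤ ∫ s, ({s | rD s ≤ lstar * rC s}.indicator rC) s ∂μ) :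
    ∀ Δ : ℝ, 0 < Δ → dualFn μ rC rD rth lstar ≤ dualFn μ rC rD rth (lstar + Δ) := by
  intro Δ hΔ
  have hsubgrad := dualFn_add_mul_le hCi hDi rth lstar Δ
  linarith [mul_nonneg hΔ.le (sub_nonneg.2 hmem)]

/-- `g` is nondecreasing to the right of `λ*`. -/
theorem stmt11 {S : Type*} [MeasurableSpace S] (μ : Measure S) [IsProbabilityMeasure μ]
    (rC rD : S → ℝ) (hC : ∀ s, 0 ≤ rC s) (hD : ∀ s, 0 ≤ rD s)
    (hCi : Integrable rC μ) (hDi : Integrable rD μ)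
    (rth : ℝ) (hrth : 0 < rth) (lstar : ℝ) (hl0 : 0 ≤ lstar)
    (hmem : rth ≤ ∫ s, ({s | rD s ≤ lstar * rC s}.indicator rC) s ∂μ)
    (hmin : ∀ l : ℝ, 0 ≤ l →
      rth ≤ ∫ s, ({s | rD s ≤ l * rC s}.indicator rC) s ∂μ → lstar ≤ l) :
    ∀ Δ : ℝ, 0 < Δ → dualFn μ rC rD rth lstar ≤ dualFn μ rC rD rth (lstar + Δ) :=
  stmt11_general μ rC rD hCi hDi rth lstar hmem
end
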